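/- Let f : ℝ → ℝ be a C^1 circle lift, and suppose x₀ ∈ ℝ, q ≥ 1 an integer, and p an integer satisfy f^[q] x₀ = x₀ + p. Then liminf_{n→∞} (1/n) · sup_{x ∈ [0,1]} |log(deriv (f^[n]) x)| ≥ (1/q) · |log(deriv (f^[q]) x₀)|. -/

import Mathlib

open Filter Function Set
open scoped AddConstMap Topology

/-!
Along the periodic orbit the chain rule gives `(f^[r + q * k])'(x₀) = (f^[r])'(x₀) * λ ^ k` with
`λ = (f^[q])'(x₀)`, so `|log (f^[n])'(x₀)|` is at least `(n / q) * |log λ|` up to an error bounded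
by `q * K`, where `K = sup |log f'|`. As `(f^[n])'` is `1`-periodic, its value at `x₀` is bounded by
the supremum over `[0, 1]`. The chain rule also bounds that supremum by `n * K`; this is needed
because the `liminf` of a real sequence that is unbounded above is a junk value.
-/

section IterateDeriv

variable {𝕜 : Type*} [NontriviallyNormedField 𝕜] {f : 𝕜 → 𝕜}

theorem deriv_iterate_eq_prod (hf : Differentiable 𝕜 f) (n : ℕ) (x : 𝕜) :
    deriv f^[n] x = ∏ j ∈ Finset.range n, deriv f (f^[j] x) := by
  induction n with
  | zero => simp
  | succ n ih =>
    rw [iterate_succ', deriv_comp x (hf _) (hf.iterate n _), ih, Finset.prod_range_succ, mul_comm]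

theorem deriv_iterate_add (hf : Differentiable 𝕜 f) (m n : ℕ) (x : 𝕜) :
    deriv f^[m + n] x = deriv f^[m] (f^[n] x) * deriv f^[n] x := by
  rw [iterate_add]
  exact deriv_comp x (hf.iterate m _) (hf.iterate n _)

theorem deriv_iterate_ne_zero (hf : Differentiable 𝕜 f) (hf' : ∀ x, deriv f x ≠ 0) (n : ℕ)
    (x : 𝕜) : deriv f^[n] x ≠ 0 := by
  rw [deriv_iterate_eq_prod hf]
  exact Finset.prod_ne_zero_iff.2 fun j _ ↦ hf' _

end IterateDeriv

theorem abs_log_deriv_iterate_le {f : ℝ → ℝ} (hf : Differentiable ℝ f)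
    (hf' : ∀ x, deriv f x ≠ 0) {K : ℝ} (hK : ∀ x, |Real.log (deriv f x)| ≤ K) (n : ℕ) (x : ℝ) :
    |Real.log (deriv f^[n] x)| ≤ n * K := by
  rw [deriv_iterate_eq_prod hf, Real.log_prod fun j _ ↦ hf' _]
  calc |∑ j ∈ Finset.range n, Real.log (deriv f (f^[j] x))|
      ≤ ∑ j ∈ Finset.range n, |Real.log (deriv f (f^[j] x))| := Finset.abs_sum_le_sum_abs _ _
    _ ≤ ∑ _j ∈ Finset.range n, K := Finset.sum_le_sum fun j _ ↦ hK _
    _ = n * K := by simp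

theorem Function.Periodic.le_ciSup_Icc {g : ℝ → ℝ} {c : ℝ} (hg : Periodic g c) (hc : 0 < c)
    (hbdd : BddAbove (range fun x : Icc 0 c ↦ g x)) (y : ℝ) : g y ≤ ⨆ x : Icc 0 c, g x := by
  obtain ⟨z, hz, hyz⟩ := hg.exists_mem_Ico₀ hc y
  rw [hyz]
  exact le_ciSup hbdd ⟨z, Ico_subset_Icc_self hz⟩

namespace AddConstMap

theorem periodic_deriv {𝕜 : Type*} [NontriviallyNormedField 𝕜] {a b : 𝕜} (f : 𝕜 →+c[a, b] 𝕜) :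
    Periodic (deriv f) a := fun x ↦ by
  rw [← deriv_comp_add_const]
  simp only [AddConstMapClass.map_add_const, deriv_add_const]

variable (f : ℝ →+c[1, 1] ℝ)

theorem deriv_add_int (x : ℝ) (m : ℤ) : deriv f (x + m) = deriv f x := by
  simpa using f.periodic_deriv.int_mul m x

theorem iterate_eq_of_map_eq_add_int {x : ℝ} {p : ℤ} (h : f x = x + p) (k : ℕ) :
    f^[k] x = x + (k * p : ℤ) := by
  have hcomm : Function.Commute f (· + (p : ℝ)) := fun y ↦ AddConstMapClass.map_add_int f y p
  simpa [add_right_iterate] using hcomm.iterate_eq_of_map_eq k h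

theorem deriv_iterate_of_map_eq_add_int (hf : Differentiable ℝ f) {x : ℝ} {p : ℤ}
    (h : f x = x + p) (k : ℕ) : deriv f^[k] x = deriv f x ^ k := by
  rw [deriv_iterate_eq_prod hf, Finset.prod_congr rfl fun j _ ↦ by
    rw [f.iterate_eq_of_map_eq_add_int h, f.deriv_add_int], Finset.prod_const, Finset.card_range]

theorem deriv_iterate_add_mul_of_periodic_orbit (hf : Differentiable ℝ f) {x₀ : ℝ} {q : ℕ}
    {p : ℤ} (hper : f^[q] x₀ = x₀ + p) (r k : ℕ) :
    deriv f^[r + q * k] x₀ = deriv f^[r] x₀ * deriv f^[q] x₀ ^ k := by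
  have hper' : (f ^ q) x₀ = x₀ + p := hper
  have horbit := (f ^ q).iterate_eq_of_map_eq_add_int hper' k
  have hderiv := (f ^ q).deriv_iterate_of_map_eq_add_int (by simpa using hf.iterate q) hper' k
  have hshift := (f ^ r).deriv_add_int x₀ (k * p)
  simp only [coe_pow] at horbit hderiv hshift
  rw [deriv_iterate_add hf, iterate_mul, horbit, hshift, hderiv]

theorem mul_abs_log_deriv_iterate_le_of_periodic_orbit (hf : Differentiable ℝ f)
    (hf' : ∀ x, deriv f x ≠ 0) {x₀ : ℝ} {q : ℕ} {p : ℤ} (hper : f^[q] x₀ = x₀ + p) (n : ℕ) :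
    (n / q : ℕ) * |Real.log (deriv f^[q] x₀)| ≤
      |Real.log (deriv f^[n] x₀)| + |Real.log (deriv f^[n % q] x₀)| := by
  have hsplit :=
    congrArg Real.log (f.deriv_iterate_add_mul_of_periodic_orbit hf hper (n % q) (n / q))
  rw [Nat.mod_add_div, Real.log_mul (deriv_iterate_ne_zero hf hf' _ _)
    (pow_ne_zero _ (deriv_iterate_ne_zero hf hf' _ _)), Real.log_pow] at hsplit
  rw [← Nat.abs_cast (n / q), ← abs_mul]
  calc |((n / q : ℕ) : ℝ) * Real.log (deriv f^[q] x₀)|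
      = |Real.log (deriv f^[n] x₀) - Real.log (deriv f^[n % q] x₀)| := by rw [hsplit]; ring_nf
    _ ≤ _ := abs_sub _ _

end AddConstMap

theorem le_liminf_one_div_mul_of_linear_bounds {s : ℕ → ℝ} {c M B : ℝ}
    (hlow : ∀ n, c * n - M ≤ s n) (hup : ∀ n, s n ≤ n * B) :
    c ≤ liminf (fun n : ℕ ↦ (1 / (n : ℝ)) * s n) atTop := by
  have hlim : Tendsto (fun n : ℕ ↦ c - M / n) atTop (𝓝 c) := by
    simpa using tendsto_const_nhds.sub (tendsto_const_div_atTop_nhds_zero_nat M)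
  have hle : ∀ᶠ n : ℕ in atTop, c - M / n ≤ (1 / (n : ℝ)) * s n := by
    filter_upwards [eventually_gt_atTop 0] with n hn
    have hn : (0 : ℝ) < n := Nat.cast_pos.2 hn
    rw [one_div_mul_eq_div, le_div_iff₀ hn, sub_mul, div_mul_cancel₀ _ hn.ne']
    linarith [hlow n]
  have hbdd : ∀ᶠ n : ℕ in atTop, (1 / (n : ℝ)) * s n ≤ B := by
    filter_upwards [eventually_gt_atTop 0] with n hn
    rw [one_div_mul_eq_div, div_le_iff₀' (Nat.cast_pos.2 hn)]
    exact hup n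
  rw [← hlim.liminf_eq]
  exact liminf_le_liminf hle hlim.isBoundedUnder_ge
    (isBoundedUnder_of_eventually_le hbdd).isCoboundedUnder_ge

/-- Case I of the proof of Theorem 1: a periodic point forces
liminf d(fⁿ,e)/n ≥ (1/q)·|log (f^[q])'(x₀)|. -/
theorem c1_growth_lower_bound_of_periodic_point
    (f : ℝ → ℝ) (hf : ContDiff ℝ 1 f)
    (hlift : ∀ x : ℝ, f (x + 1) = f x + 1)
    (hpos : ∀ x : ℝ, 0 < deriv f x)
    (x₀ : ℝ) (q : ℕ) (p : ℤ) (hq : 1 ≤ q) (hper : f^[q] x₀ = x₀ + p) :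
    (1 / (q : ℝ)) * |Real.log (deriv (f^[q]) x₀)| ≤
      Filter.liminf
        (fun n : ℕ => (1 / (n : ℝ)) * ⨆ x : Set.Icc (0:ℝ) 1, |Real.log (deriv (f^[n]) x)|)
        Filter.atTop := by
  obtain ⟨F, rfl⟩ : ∃ F : ℝ →+c[1, 1] ℝ, ⇑F = f := ⟨⟨f, hlift⟩, rfl⟩
  have hdiff : Differentiable ℝ F := hf.differentiable one_ne_zero
  have hne : ∀ x, deriv F x ≠ 0 := fun x ↦ (hpos x).ne'
  have hper_deriv (n : ℕ) : Periodic (fun x ↦ |Real.log (deriv F^[n] x)|) 1 :=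
    fun x ↦ by simp only [← AddConstMap.coe_pow, (F ^ n).periodic_deriv x]
  set K := ⨆ x : Icc (0 : ℝ) 1, |Real.log (deriv F x)|
  have hK (x : ℝ) : |Real.log (deriv F x)| ≤ K := by
    have hcont : Continuous fun x ↦ |Real.log (deriv F x)| :=
      ((hf.continuous_deriv le_rfl).log hne).abs
    simpa using (hper_deriv 1).le_ciSup_Icc one_pos
      (isCompact_range (hcont.comp continuous_subtype_val)).bddAbove x
  have hsup (n : ℕ) (y : ℝ) :
      |Real.log (deriv F^[n] y)| ≤ ⨆ x : Icc (0 : ℝ) 1, |Real.log (deriv F^[n] x)| :=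
    (hper_deriv n).le_ciSup_Icc one_pos
      ⟨n * K, forall_mem_range.2 fun x ↦ abs_log_deriv_iterate_le hdiff hne hK n x⟩ y
  set L := |Real.log (deriv F^[q] x₀)|
  refine le_liminf_one_div_mul_of_linear_bounds (M := L + q * K) (B := K) (fun n ↦ ?_)
    fun n ↦ ciSup_le fun x ↦ abs_log_deriv_iterate_le hdiff hne hK n x
  have hquot : ((n : ℝ) / q - 1) * L ≤ (n / q : ℕ) * L := by
    rw [← Nat.floor_div_eq_div (K := ℝ)]
    exact mul_le_mul_of_nonneg_right (Nat.sub_one_lt_floor _).le (abs_nonneg _)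
  have hrem : |Real.log (deriv F^[n % q] x₀)| ≤ q * K :=
    (abs_log_deriv_iterate_le hdiff hne hK _ x₀).trans <| mul_le_mul_of_nonneg_right
      (by exact_mod_cast (Nat.mod_lt n hq).le) ((abs_nonneg _).trans (hK 0))
  have hrearrange : 1 / (q : ℝ) * L * n = ((n : ℝ) / q - 1) * L + L := by ring
  linarith [F.mul_abs_log_deriv_iterate_le_of_periodic_orbit hdiff hne hper n, hsup n x₀]
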